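/- Let C be a skew α-constacyclic code of length n over R with respect to θ_t of order k, α a unit fixed by θ_t with α² = 1, and let l = gcd(n,k). Then C is an α-quasi-twisted code of index l: writing n = ml, whenever (c_{0,0},...,c_{0,l-1},...,c_{m-1,0},...,c_{m-1,l-1}) ∈ C, also (αc_{m-1,0},...,αc_{m-1,l-1}, c_{0,0},...,c_{0,l-1},...,c_{m-2,0},...,c_{m-2,l-1}) ∈ C. -/

import Mathlib

/-!
The Frobenius action θ is multiplicative and fixes α, so it commutes with the (non-skew)
α-constacyclic shift σ, and the skew shift factors as τ = σ ∘ θ. Hence τ^N = σ^N ∘ θ^N.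
By Bézout choose N = k s = Q n + gcd(n, k): then θ^N = id, and since σ^n is multiplication
by α, τ^N = α^Q σ^gcd(n,k). As α² = 1, the quasi-twisted shift σ^gcd(n,k) c = α^Q τ^N c
lies in C.
-/

/-- The standard form `a + u*b + v*c + u*v*d` of an element of
`R = F_q + uF_q + vF_q + uvF_q`. -/
def stdForm (F R : Type*) [Field F] [CommRing R] [Algebra F R] (u v : R)
    (x : F × F × F × F) : R :=
  algebraMap F R x.1 + u * algebraMap F R x.2.1 + v * algebraMap F R x.2.2.1
    + u * v * algebraMap F R x.2.2.2

/-- The skew `α`-constacyclic shift `τ_α` with respect to `θ`. -/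
def skewConstaShift {R : Type*} [Mul R] [One R] [DecidableEq R] (θ : R → R) (α : R)
    {n : ℕ} [NeZero n] (x : Fin n → R) : Fin n → R :=
  fun i => (if i = 0 then α else 1) * θ (x (i - 1))

open Function

section StdForm

variable {F R : Type*} [Field F] [CommRing R] [Algebra F R] {u v : R}

theorem stdForm_mul (hu : u * u = u) (hv : v * v = v) (a b c d a' b' c' d' : F) :
    stdForm F R u v (a, b, c, d) * stdForm F R u v (a', b', c', d')
      = stdForm F R u v (a * a', a * b' + b * a' + b * b', a * c' + c * a' + c * c',
          a * d' + d * a' + b * c' + c * b' + b * d' + d * b' + c * d' + d * c' + d * d') := by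
  simp only [stdForm, map_add, map_mul]
  linear_combination (algebraMap F R b * algebraMap F R b'
      + v * (algebraMap F R b * algebraMap F R d' + algebraMap F R d * algebraMap F R b')
      + v * v * (algebraMap F R d * algebraMap F R d')) * hu
    + (algebraMap F R c * algebraMap F R c'
      + u * (algebraMap F R c * algebraMap F R d' + algebraMap F R d * algebraMap F R c')
      + u * (algebraMap F R d * algebraMap F R d')) * hv

theorem map_mul_of_map_stdForm (hu : u * u = u) (hv : v * v = v)
    (hsurj : Surjective (stdForm F R u v)) (φ : F →+* F) {θ : R → R}
    (hθ : ∀ a b c d : F, θ (stdForm F R u v (a, b, c, d)) = stdForm F R u v (φ a, φ b, φ c, φ d))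
    (x y : R) : θ (x * y) = θ x * θ y := by
  obtain ⟨⟨a, b, c, d⟩, rfl⟩ := hsurj x
  obtain ⟨⟨a', b', c', d'⟩, rfl⟩ := hsurj y
  simp only [stdForm_mul hu hv, hθ, map_add, map_mul]

end StdForm

section ConstaShift

variable {R : Type*} [CommRing R] {n : ℕ} [NeZero n]

def constaShift (α : R) : Module.End R (Fin n → R) where
  toFun x i := (if i = 0 then α else 1) * x (i - 1)
  map_add' x y := by ext i; simp only [Pi.add_apply, mul_add]
  map_smul' a x := by ext i; simp only [Pi.smul_apply, smul_eq_mul, RingHom.id_apply]; ring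

theorem constaShift_apply (α : R) (x : Fin n → R) (i : Fin n) :
    constaShift α x i = (if i = 0 then α else 1) * x (i - 1) := rfl

theorem skewConstaShift_eq_constaShift_comp [DecidableEq R] (θ : R → R) (α : R) :
    skewConstaShift θ α = constaShift α ∘ fun x : Fin n → R => θ ∘ x := rfl

theorem constaShift_pow_apply (α : R) {j : ℕ} (hj : j ≤ n) (x : Fin n → R) (i : Fin n) :
    (constaShift α ^ j) x i = (if (i : ℕ) < j then α else 1) * x (i - Fin.ofNat n j) := by
  obtain ⟨m, rfl⟩ := Nat.exists_eq_succ_of_ne_zero (NeZero.ne n)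
  induction j generalizing i with
  | zero => simp
  | succ j ih =>
    have hidx : i - 1 - Fin.ofNat _ j = i - Fin.ofNat _ (j + 1) := by
      rw [sub_sub]; congr 1; ext; simp [Fin.val_add, Nat.add_mod, add_comm]
    rw [pow_succ', Module.End.mul_apply, constaShift_apply, ih (by omega), hidx, ← mul_assoc]
    congr 1
    rcases eq_or_ne i 0 with rfl | hi
    · rw [if_pos rfl, Fin.coe_sub_one, if_pos rfl, if_neg (by omega), if_pos (by simp), mul_one]
    · have hi' : (i : ℕ) ≠ 0 := Fin.val_ne_zero_iff.2 hi
      rw [if_neg hi, one_mul, Fin.coe_sub_one, if_neg hi]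
      split_ifs <;> first | rfl | omega

theorem constaShift_pow_self (α : R) : constaShift α ^ n = α • (1 : Module.End R (Fin n → R)) := by
  ext x i
  simp [constaShift_pow_apply α le_rfl]

theorem constaShift_pow_mul_add (α : R) (Q j : ℕ) :
    constaShift α ^ (Q * n + j) = α ^ Q • (constaShift α ^ j : Module.End R (Fin n → R)) := by
  rw [pow_add, mul_comm, pow_mul, constaShift_pow_self, smul_pow, one_pow, smul_mul_assoc, one_mul]

theorem skewConstaShift_iterate [DecidableEq R] {θ : R → R} {α : R}
    (hθα : ∀ y, θ (α * y) = α * θ y) (N : ℕ) :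
    (skewConstaShift θ α)^[N] = ⇑(constaShift α ^ N) ∘ fun x : Fin n → R => θ^[N] ∘ x := by
  have hcomm : Function.Commute ⇑(constaShift α) fun x : Fin n → R => θ ∘ x := by
    intro x
    ext i
    simp only [comp_apply, constaShift_apply]
    split_ifs
    · exact (hθα _).symm
    · rw [one_mul, one_mul]
  rw [skewConstaShift_eq_constaShift_comp, hcomm.comp_iterate, Module.End.coe_pow]
  congr 1
  funext x
  induction N with
  | zero => rfl
  | succ N ih => rw [iterate_succ_apply', ih, iterate_succ', comp_assoc]

end ConstaShift

theorem exists_mul_eq_mul_add_gcd {n k : ℕ} (hn : 0 < n) (hk : 0 < k) :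
    ∃ s Q, k * s = Q * n + Nat.gcd n k := by
  rcases (Nat.gcd_le_left k hn).lt_or_eq with hlt | heq
  · rw [Nat.gcd_comm] at hlt ⊢
    obtain ⟨s, -, hs⟩ := Nat.exists_mul_mod_eq_gcd hlt
    exact ⟨s, k * s / n, by rw [← hs, mul_comm _ n, Nat.div_add_mod]⟩
  · obtain ⟨d, rfl⟩ : n ∣ k := heq ▸ Nat.gcd_dvd_right n k
    obtain ⟨d, rfl⟩ := Nat.exists_eq_succ_of_ne_zero (Nat.pos_of_mul_pos_left hk).ne'
    exact ⟨1, d, by rw [heq, Nat.succ_eq_add_one]; ring⟩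

theorem stmt15_general (p m t : ℕ) (hp : p.Prime)
    (F : Type*) [Field F] [Fintype F] (hF : Fintype.card F = p ^ m)
    (R : Type*) [CommRing R] [DecidableEq R] [Algebra F R] (u v : R)
    (hu : u * u = u) (hv : v * v = v)
    (hbij : Function.Bijective (stdForm F R u v))
    (θ : R → R)
    (hθ : ∀ a b c d : F, θ (stdForm F R u v (a, b, c, d)) =
      stdForm F R u v (a ^ p ^ t, b ^ p ^ t, c ^ p ^ t, d ^ p ^ t))
    -- k is the order of θ
    (k : ℕ) (hk0 : 0 < k) (hkid : θ^[k] = id)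
    (α : R) (hαfix : θ α = α) (hα2 : α ^ 2 = 1)
    (n : ℕ) [NeZero n]
    (C : Submodule R (Fin n → R))
    (hC : skewConstaShift θ α '' (C : Set (Fin n → R)) = C) :
    -- C is α-quasi-twisted of index l = gcd(n,k): shifting any codeword by l positions,
    -- with the l wrapped-around entries multiplied by α, stays in C
    ∀ c ∈ C,
      (fun i : Fin n =>
        (if (i : ℕ) < Nat.gcd n k then α else 1) * c (i - Fin.ofNat n (Nat.gcd n k))) ∈ C := by
  intro c hc
  have := Fact.mk hp
  have : CharP F p := charP_of_card_eq_prime_pow hF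
  have hθα (y : R) : θ (α * y) = α * θ y := by
    rw [map_mul_of_map_stdForm hu hv hbij.2 (iterateFrobenius F p t) hθ, hαfix]
  obtain ⟨s, Q, hsQ⟩ := exists_mul_eq_mul_add_gcd (Nat.pos_of_neZero n) hk0
  have hτ : (skewConstaShift θ α)^[k * s] c = α ^ Q • (constaShift α ^ Nat.gcd n k) c := by
    rw [skewConstaShift_iterate hθα, iterate_mul, hkid, iterate_id, hsQ,
      constaShift_pow_mul_add]
    rfl
  have hαQ : α ^ Q * α ^ Q = 1 := by rw [← pow_add, ← two_mul, pow_mul, hα2, one_pow]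
  have hmem := C.smul_mem (α ^ Q) ((Set.mapsTo_iff_image_subset.2 hC.subset).iterate (k * s) hc)
  rw [hτ, smul_smul, hαQ, one_smul] at hmem
  convert hmem using 1
  ext i
  rw [constaShift_pow_apply α (Nat.gcd_le_left k (Nat.pos_of_neZero n))]

theorem stmt15 (p m t : ℕ) (hp : p.Prime) (hodd : p ≠ 2) (ht : 0 < t) (htm : t ∣ m)
    (F : Type*) [Field F] [Fintype F] (hF : Fintype.card F = p ^ m)
    (R : Type*) [CommRing R] [DecidableEq R] [Algebra F R] (u v : R)
    (hu : u * u = u) (hv : v * v = v)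
    (hbij : Function.Bijective (stdForm F R u v))
    (θ : R → R)
    (hθ : ∀ a b c d : F, θ (stdForm F R u v (a, b, c, d)) =
      stdForm F R u v (a ^ p ^ t, b ^ p ^ t, c ^ p ^ t, d ^ p ^ t))
    -- k is the order of θ
    (k : ℕ) (hk0 : 0 < k) (hkid : θ^[k] = id)
    (hkmin : ∀ j : ℕ, 0 < j → j < k → θ^[j] ≠ id)
    (α : R) (hα : IsUnit α) (hαfix : θ α = α) (hα2 : α ^ 2 = 1)
    (n : ℕ) [NeZero n]
    (C : Submodule R (Fin n → R))
    (hC : skewConstaShift θ α '' (C : Set (Fin n → R)) = C) :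
    -- C is α-quasi-twisted of index l = gcd(n,k): shifting any codeword by l positions,
    -- with the l wrapped-around entries multiplied by α, stays in C
    ∀ c ∈ C,
      (fun i : Fin n =>
        (if (i : ℕ) < Nat.gcd n k then α else 1) * c (i - Fin.ofNat n (Nat.gcd n k))) ∈ C :=
  stmt15_general p m t hp F hF R u v hu hv hbij θ hθ k hk0 hkid α hαfix hα2 n C hC
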